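/- If A is a topologically independent subset of a Hausdorff abelian topological group G, then the Kalton map κ_A : S_A → ⟨A⟩ is an open map onto the subgroup ⟨A⟩ generated by A. -/

import Mathlib

open Filter Topology

section Defs
variable {G : Type*} [AddCommGroup G] [TopologicalSpace G]

/-- A set `A` in a topological abelian group is *topologically independent* if `0 ∉ A` and
for every neighbourhood `W` of `0` there is a neighbourhood `U` of `0` such that whenever a
finite integer combination of elements of `A` lies in `U`, each of its terms lies in `W`. -/
def TopIndep (A : Set G) : Prop :=
  (0 : G) ∉ A ∧ ∀ W ∈ 𝓝 (0 : G), ∃ U ∈ 𝓝 (0 : G),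
    ∀ F : Finset G, ↑F ⊆ A → ∀ z : G → ℤ,
      (∑ a ∈ F, z a • a) ∈ U → ∀ a ∈ F, z a • a ∈ W

/-- Algebraic independence of a subset of an abelian group. -/
def Indep (A : Set G) : Prop :=
  (0 : G) ∉ A ∧ ∀ F : Finset G, ↑F ⊆ A → ∀ z : G → ℤ,
    (∑ a ∈ F, z a • a) = 0 → ∀ a ∈ F, z a • a = 0

/-- `A` is absolutely Cauchy summable: every neighbourhood of `0` contains the subgroup
generated by `A \ F` for some finite `F ⊆ A`. -/
def AbsCauchySummable (A : Set G) : Prop :=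
  ∀ U ∈ 𝓝 (0 : G), ∃ F : Finset G, ↑F ⊆ A ∧
    (AddSubgroup.closure (A \ ↑F) : Set G) ⊆ U

/-- `A` is absolutely summable: for every integer family the net of finite partial sums
converges. -/
def AbsSummable (A : Set G) : Prop :=
  ∀ z : A → ℤ, ∃ g : G, HasSum (fun a : A => z a • (a : G)) g

end Defs

/-- The direct sum `⊕_i H i`, realized as the subgroup of the product `Π i, H i`
consisting of finitely supported elements; it carries the topology inherited from the
Tychonoff product topology. -/
def FinSupp (ι : Type*) (H : ι → Type*) [∀ i, AddCommGroup (H i)] :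
    AddSubgroup (Π i, H i) where
  carrier := {f | {i | f i ≠ 0}.Finite}
  zero_mem' := by simp
  add_mem' := by
    intro f g hf hg
    refine (hf.union hg).subset fun i hi => ?_
    by_contra h
    simp only [Set.mem_union, Set.mem_setOf_eq, not_or, not_not] at h
    exact hi (by simp [h.1, h.2])
  neg_mem' := by
    intro f hf
    refine hf.subset fun i hi => ?_
    simp only [Set.mem_setOf_eq] at hi ⊢
    simpa using hi

/-- The Kalton map `κ_A : S_A = ⊕_{a ∈ A} ⟨a⟩ → G`, sending a finitely supported family to
the sum of its components. -/
noncomputable def kalton {G : Type*} [AddCommGroup G] (A : Set G)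
    (f : FinSupp A (fun a => AddSubgroup.zmultiples (a : G))) : G :=
  ∑ᶠ a : A, ((f.1 a : G))

section Sing
variable {ι : Type*} [DecidableEq ι] {H : ι → Type*} [∀ i, AddCommGroup (H i)]

/-- The element of the direct sum supported at `i` with value `x`. -/
def sing (i : ι) (x : H i) : FinSupp ι H :=
  ⟨Pi.single i x, (Set.finite_singleton i).subset (by
    intro b hb
    simp only [Set.mem_setOf_eq] at hb
    by_contra hba
    exact hb (Pi.single_eq_of_ne (by simpa using hba) x))⟩

end Sing

/-!
Since `κ_A` is a homomorphism onto `⟨A⟩`, it suffices to see that the image of a neighbourhood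
`N` of `0` in `S_A` is a neighbourhood of `0` in `⟨A⟩`. Such an `N` constrains only finitely many
coordinates, so it contains every `x` all of whose coordinates lie in some neighbourhood `W` of
`0` in `G`. Topological independence gives `U` with `κ_A x ∈ U` forcing every coordinate of `x`
into `W`; hence `κ_A(N) ⊇ U ∩ ⟨A⟩`.
-/

namespace FinSupp
variable {G : Type*} [AddCommGroup G] {ι : Type*} {K : ι → AddSubgroup G}

theorem finite_support_coe (x : FinSupp ι (fun i => K i)) :
    (Function.support fun i => (x.1 i : G)).Finite :=
  x.2.subset fun i hi => by simpa using hi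

variable [TopologicalSpace G]

theorem exists_nhds_zero_forall_subset {N : Set (FinSupp ι (fun i => K i))}
    (hN : N ∈ 𝓝 0) : ∃ W ∈ 𝓝 (0 : G), {x | ∀ i, (x.1 i : G) ∈ W} ⊆ N := by
  rw [nhds_subtype, Filter.mem_comap] at hN
  obtain ⟨t, ht, htN⟩ := hN
  rw [nhds_pi, Filter.mem_pi'] at ht
  obtain ⟨I, s, hs, hIs⟩ := ht
  have hs' : ∀ i, ∃ W ∈ 𝓝 (0 : G), Subtype.val ⁻¹' W ⊆ s i := fun i => by
    have := hs i
    rwa [nhds_subtype, Filter.mem_comap] at this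
  choose W hW hWs using hs'
  refine ⟨⋂ i ∈ I, W i, (Filter.biInter_finset_mem I).mpr fun i _ => hW i, fun x hx => ?_⟩
  exact htN (hIs fun i hi => hWs i (Set.mem_iInter₂.mp (hx i) i hi))

end FinSupp

section Kalton
variable {G : Type*} [AddCommGroup G] {A : Set G}

theorem kalton_add (x y : FinSupp A (fun a => AddSubgroup.zmultiples (a : G))) :
    kalton A (x + y) = kalton A x + kalton A y :=
  finsum_add_distrib (FinSupp.finite_support_coe x) (FinSupp.finite_support_coe y)

noncomputable def kaltonHom (A : Set G) :
    FinSupp A (fun a => AddSubgroup.zmultiples (a : G)) →+ G where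
  toFun := kalton A
  map_zero' := finsum_zero
  map_add' := kalton_add

theorem kaltonHom_apply (x : FinSupp A (fun a => AddSubgroup.zmultiples (a : G))) :
    kaltonHom A x = kalton A x := rfl

theorem kalton_sing [DecidableEq A] (a : A) (y : AddSubgroup.zmultiples (a : G)) :
    kalton A (sing a y) = y := by
  rw [kalton, finsum_eq_single _ a fun b hb => by simp [sing, hb]]
  simp [sing]

theorem kaltonHom_range : (kaltonHom A).range = AddSubgroup.closure A := by
  classical
  refine le_antisymm ?_ (AddSubgroup.closure_le _ |>.mpr fun a ha =>
    ⟨sing ⟨a, ha⟩ ⟨a, AddSubgroup.mem_zmultiples a⟩, kalton_sing _ _⟩)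
  rintro _ ⟨x, rfl⟩
  rw [kaltonHom_apply, kalton, finsum_eq_sum _ (FinSupp.finite_support_coe x)]
  exact sum_mem fun a _ =>
    AddSubgroup.zmultiples_le_of_mem (AddSubgroup.subset_closure a.2) (x.1 a).2

end Kalton

namespace TopIndep
variable {G : Type*} [AddCommGroup G] [TopologicalSpace G] {A : Set G}

theorem exists_nhds_zero_forall_mem_of_sum_mem (hA : TopIndep A) {W : Set G} (hW : W ∈ 𝓝 0) :
    ∃ U ∈ 𝓝 (0 : G), ∀ (s : Finset A) (c : A → G),
      (∀ a : A, c a ∈ AddSubgroup.zmultiples (a : G)) → ∑ a ∈ s, c a ∈ U → ∀ a ∈ s, c a ∈ W := by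
  obtain ⟨U, hU, hUW⟩ := hA.2 W hW
  refine ⟨U, hU, fun s c hc hsum a ha => ?_⟩
  choose n hn using fun a => AddSubgroup.mem_zmultiples_iff.mp (hc a)
  classical
  let z : G → ℤ := fun g => if h : g ∈ A then n ⟨g, h⟩ else 0
  have hz : ∀ a : A, z a • (a : G) = c a := fun a => by simp [z, hn]
  have hsum' : ∑ g ∈ s.map (Function.Embedding.subtype _), z g • g = ∑ a ∈ s, c a := by
    simp only [Finset.sum_map, Function.Embedding.coe_subtype, hz]
  rw [← hz]
  exact hUW _ (by simp) z (hsum' ▸ hsum) _ (Finset.mem_map_of_mem _ ha)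

theorem exists_nhds_zero_forall_mem_of_kalton_mem (hA : TopIndep A) {W : Set G} (hW : W ∈ 𝓝 0) :
    ∃ U ∈ 𝓝 (0 : G), ∀ x : FinSupp A (fun a => AddSubgroup.zmultiples (a : G)),
      kalton A x ∈ U → ∀ a : A, (x.1 a : G) ∈ W := by
  obtain ⟨U, hU, hUW⟩ := hA.exists_nhds_zero_forall_mem_of_sum_mem hW
  refine ⟨U, hU, fun x hx a => ?_⟩
  set s := (FinSupp.finite_support_coe x).toFinset
  by_cases ha : a ∈ s
  · rw [kalton, finsum_eq_sum _ (FinSupp.finite_support_coe x)] at hx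
    exact hUW s (fun a => x.1 a) (fun a => (x.1 a).2) hx a ha
  · have hxa : (x.1 a : G) = 0 := by simpa [s] using ha
    exact hxa ▸ mem_of_mem_nhds hW

end TopIndep

theorem TopIndep.isOpenMap_kaltonHom_rangeRestrict {G : Type*} [AddCommGroup G]
    [TopologicalSpace G] [IsTopologicalAddGroup G] {A : Set G} (hA : TopIndep A) :
    IsOpenMap (kaltonHom A).rangeRestrict := by
  refine IsTopologicalAddGroup.isOpenMap_iff_nhds_zero.mpr <|
    Filter.le_map_iff.mpr fun N hN => ?_
  obtain ⟨W, hW, hWN⟩ := FinSupp.exists_nhds_zero_forall_subset hN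
  obtain ⟨U, hU, hUW⟩ := hA.exists_nhds_zero_forall_mem_of_kalton_mem hW
  have hUN : Subtype.val ⁻¹' U ⊆ (kaltonHom A).rangeRestrict '' N := by
    intro g hg
    obtain ⟨x, rfl⟩ := (kaltonHom A).rangeRestrict_surjective g
    exact ⟨x, hWN (hUW x hg), rfl⟩
  exact Filter.mem_of_superset (continuous_subtype_val.continuousAt.preimage_mem_nhds hU) hUN

theorem stmt6_general {G : Type*} [AddCommGroup G] [TopologicalSpace G] [IsTopologicalAddGroup G]
    (A : Set G) (hA : TopIndep A) :
    ∀ O : Set ↥(FinSupp A (fun a => AddSubgroup.zmultiples (a : G))), IsOpen O →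
      ∃ V : Set G, IsOpen V ∧
        kalton A '' O = V ∩ (AddSubgroup.closure A : Set G) := by
  intro O hO
  obtain ⟨V, hV, hVO⟩ := isOpen_induced_iff.mp (hA.isOpenMap_kaltonHom_rangeRestrict O hO)
  refine ⟨V, hV, ?_⟩
  calc kalton A '' O = Subtype.val '' ((kaltonHom A).rangeRestrict '' O) := by
        rw [Set.image_image]; rfl
    _ = V ∩ (AddSubgroup.closure A : Set G) := by
        rw [← hVO, Set.image_preimage_eq_inter_range, Subtype.range_val, ← kaltonHom_range]

theorem stmt6 {G : Type*} [AddCommGroup G] [TopologicalSpace G] [IsTopologicalAddGroup G]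
    [T2Space G] (A : Set G) (hA : TopIndep A) :
    ∀ O : Set ↥(FinSupp A (fun a => AddSubgroup.zmultiples (a : G))), IsOpen O →
      ∃ V : Set G, IsOpen V ∧
        kalton A '' O = V ∩ (AddSubgroup.closure A : Set G) :=
  stmt6_general A hA
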